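/- arXiv:1907.03881 — 2 statements merged into one kernel-verified Lean document; each statement's English description precedes it below -/
import Mathlib

section
/- For integers n, m ≥ 1, the number A_{n,m} of standard Young tableaux of rectangular shape with n columns and m rows satisfies A_{n,m} = (mn)! · s(m−1) · s(n−1) / s(m+n−1), where s is the superfactorial. -/
open Finset

/-- The rectangular Young diagram with `w` columns and `n` rows. -/
def rectDiagram (w n : ℕ) : YoungDiagram where
  cells := Finset.range n ×ˢ Finset.range w
  isLowerSet := by
    rintro ⟨a1, a2⟩ ⟨b1, b2⟩ hba ha
    simp only [Finset.coe_product, Set.mem_prod, Finset.mem_coe, Finset.mem_range,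
      Prod.mk_le_mk] at *
    exact ⟨lt_of_le_of_lt hba.1 ha.1, lt_of_le_of_lt hba.2 ha.2⟩

/-- The content of a semistandard Young tableau: `content T v` is the number of cells whose
entry equals `v`. -/
def SemistandardYoungTableau.content {lam : YoungDiagram}
    (T : SemistandardYoungTableau lam) (v : ℕ) : ℕ :=
  (lam.cells.filter fun c => T c.1 c.2 = v).card

/-- The Kostka number `K_{λ,μ}`: the number of semistandard Young tableaux of shape `λ`
and content `μ`. -/
noncomputable def kostkaNumber (lam : YoungDiagram) (mu : ℕ → ℕ) : ℕ :=
  Nat.card {T : SemistandardYoungTableau lam // ∀ v, T.content v = mu v}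

/-- The weight vector `κ^n_a`: each of `1,…,n` appears `a` times, each of `n+1,…,2n`
appears once. -/
def kappa (n a : ℕ) : ℕ → ℕ := fun v =>
  if 1 ≤ v ∧ v ≤ n then a else if v ≤ 2 * n then 1 else 0

/-- The skew weight vector `κ^{n,k}_a`: each of `1,…,n−k` appears `a` times, each of
`n−k+1,…,2n+k(a−1)` appears once. -/
def kappaSkew (n : ℕ) (k : ℤ) (a : ℕ) : ℕ → ℕ := fun v =>
  if 1 ≤ (v : ℤ) ∧ (v : ℤ) ≤ (n : ℤ) - k then a
  else if (v : ℤ) ≤ 2 * (n : ℤ) + k * ((a : ℤ) - 1) then 1 else 0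

/-- A semistandard Young tableau is standard if it contains each of `1,…,N` exactly once,
where `N` is the number of cells. -/
def SemistandardYoungTableau.IsStandard {lam : YoungDiagram}
    (T : SemistandardYoungTableau lam) : Prop :=
  ∀ v, T.content v = if 1 ≤ v ∧ v ≤ lam.card then 1 else 0

/-- The number of standard Young tableaux of shape `lam`. -/
noncomputable def numSYT (lam : YoungDiagram) : ℕ :=
  Nat.card {T : SemistandardYoungTableau lam // T.IsStandard}

/-- `σ` has longest increasing subsequence of length at most `w`. -/
def HasLisAtMost {n : ℕ} (σ : Equiv.Perm (Fin n)) (w : ℕ) : Prop :=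
  ∀ s : Finset (Fin n), StrictMonoOn (⇑σ) ↑s → s.card ≤ w

/-- There are `k` pairwise disjoint increasing subsequences of `σ`, each of length `w`,
whose value sets are pairwise disjoint and together are exactly `{1,…,kw}`. -/
def HasDisjointIncreasingCover {m : ℕ} (σ : Equiv.Perm (Fin m)) (k w : ℕ) : Prop :=
  ∃ S : Fin k → Finset (Fin m),
    (∀ i, StrictMonoOn (⇑σ) ↑(S i)) ∧
    (∀ i, (S i).card = w) ∧
    (Pairwise fun i j => Disjoint (S i) (S j)) ∧
    (Pairwise fun i j => Disjoint ((S i).image ⇑σ) ((S j).image ⇑σ)) ∧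
    (Finset.univ.biUnion fun i => (S i).image ⇑σ) =
      Finset.univ.filter fun x : Fin m => (x : ℕ) < k * w

/-- `W ≼ V` : `|W| ≥ |V|` and the `i`-th smallest element of `W` is at most the `i`-th
smallest element of `V`, for each `i < |V|`. -/
def colLE (W V : Finset ℕ) : Prop :=
  V.card ≤ W.card ∧
    ∀ i < V.card, (W.sort (· ≤ ·)).getD i 0 ≤ (V.sort (· ≤ ·)).getD i 0

/-- The superfactorial `s(k) = ∏_{i=1}^k i!`. -/
def superfac (k : ℕ) : ℕ := ∏ i ∈ Finset.range k, Nat.factorial (i + 1)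

namespace SYTaux

open SemistandardYoungTableau

variable {μ : YoungDiagram}

lemma notMem_of_content_eq_zero {T : SemistandardYoungTableau μ} {v : ℕ}
    (h : T.content v = 0) {x : ℕ × ℕ} (hx : x ∈ μ.cells) : T x.1 x.2 ≠ v := by
  intro hv
  have : x ∈ μ.cells.filter fun c => T c.1 c.2 = v := Finset.mem_filter.mpr ⟨hx, hv⟩
  rw [content, Finset.card_eq_zero] at h
  simp [h] at this

lemma std_entry_le {T : SemistandardYoungTableau μ} (hT : T.IsStandard)
    {i j : ℕ} (h : (i, j) ∈ μ) : T i j ≤ μ.card := by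
  by_contra hlt
  push_neg at hlt
  have h0 : T.content (T i j) = 0 := by
    rw [hT]; rw [if_neg]; omega
  exact notMem_of_content_eq_zero h0 (μ.mem_cells _ |>.mpr h) rfl

lemma std_one_le_entry {T : SemistandardYoungTableau μ} (hT : T.IsStandard)
    {i j : ℕ} (h : (i, j) ∈ μ) : 1 ≤ T i j := by
  by_contra hlt
  push_neg at hlt
  have h0 : T.content (T i j) = 0 := by
    rw [hT]; rw [if_neg]; omega
  exact notMem_of_content_eq_zero h0 (μ.mem_cells _ |>.mpr h) rfl

lemma std_entry_le' {T : SemistandardYoungTableau μ} (hT : T.IsStandard)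
    (i j : ℕ) : T i j ≤ μ.card := by
  by_cases h : (i, j) ∈ μ
  · exact std_entry_le hT h
  · rw [T.zeros h]; exact Nat.zero_le _

/-- Standard tableaux of a given shape form a finite type. -/
instance : Finite {T : SemistandardYoungTableau μ // T.IsStandard} := by
  refine Finite.of_injective
    (fun T => (fun c : μ.cells => (⟨T.1 c.1.1 c.1.2, Nat.lt_succ_of_le (std_entry_le' T.2 _ _)⟩ :
      Fin (μ.card + 1)))) ?_
  intro T S h
  ext i j
  by_cases hc : (i, j) ∈ μ
  · have := congrFun h ⟨(i, j), (μ.mem_cells _).mpr hc⟩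
    simpa [Fin.ext_iff] using this
  · rw [T.1.zeros hc, S.1.zeros hc]

/-- corner cells -/
def IsCorner (μ : YoungDiagram) (c : ℕ × ℕ) : Prop :=
  c ∈ μ ∧ (c.1 + 1, c.2) ∉ μ ∧ (c.1, c.2 + 1) ∉ μ

def cornersFinset (μ : YoungDiagram) : Finset (ℕ × ℕ) :=
  μ.cells.filter fun c => (c.1 + 1, c.2) ∉ μ ∧ (c.1, c.2 + 1) ∉ μ

lemma mem_cornersFinset {c : ℕ × ℕ} : c ∈ cornersFinset μ ↔ IsCorner μ c := by
  simp [cornersFinset, IsCorner, and_assoc]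

open Classical in
/-- Erasing a corner cell of a Young diagram. -/
noncomputable def eraseCell (μ : YoungDiagram) (c : ℕ × ℕ) : YoungDiagram :=
  if h : IsCorner μ c then
    { cells := μ.cells.erase c
      isLowerSet := by
        rintro ⟨y1, y2⟩ ⟨x1, x2⟩ hxy hy
        simp only [Finset.coe_erase, Set.mem_diff, Finset.mem_coe, YoungDiagram.mem_cells,
          Set.mem_singleton_iff] at hy ⊢
        obtain ⟨hy1, hy2⟩ := hy
        obtain ⟨hx1, hx2⟩ := Prod.mk_le_mk.mp hxy
        refine ⟨μ.up_left_mem hx1 hx2 hy1, ?_⟩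
        rintro rfl
        obtain ⟨hc, hc1, hc2⟩ := h
        rcases Nat.lt_or_ge x1 y1 with h1 | h1
        · exact hc1 (μ.up_left_mem (by omega) (by simpa using hx2) hy1)
        · have : x1 = y1 := le_antisymm hx1 h1
          subst this
          rcases Nat.lt_or_ge x2 y2 with h2 | h2
          · exact hc2 (μ.up_left_mem le_rfl (by omega) hy1)
          · exact hy2 (Prod.ext rfl (le_antisymm h2 hx2)) }
  else μ

lemma cells_eraseCell {c : ℕ × ℕ} (h : IsCorner μ c) :
    (eraseCell μ c).cells = μ.cells.erase c := by
  rw [eraseCell, dif_pos h]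

lemma mem_eraseCell {x c : ℕ × ℕ} (h : IsCorner μ c) :
    x ∈ eraseCell μ c ↔ x ∈ μ ∧ x ≠ c := by
  rw [← YoungDiagram.mem_cells, cells_eraseCell h, Finset.mem_erase]
  simp [and_comm]

lemma card_eraseCell {c : ℕ × ℕ} (h : IsCorner μ c) : (eraseCell μ c).card = μ.card - 1 := by
  show (eraseCell μ c).cells.card = μ.cells.card - 1
  rw [cells_eraseCell h, Finset.card_erase_of_mem (by simpa using h.1)]

end SYTaux

namespace SYTaux

variable {μ : YoungDiagram}

lemma rowLen_eq_of {i r : ℕ} (H : ∀ j, (i, j) ∈ μ ↔ j < r) : μ.rowLen i = r := by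
  rcases Nat.lt_trichotomy (μ.rowLen i) r with h | h | h
  · have := (H (μ.rowLen i)).mpr h
    rw [YoungDiagram.mem_iff_lt_rowLen] at this
    omega
  · exact h
  · have := (H r).mp (YoungDiagram.mem_iff_lt_rowLen.mpr h)
    omega

lemma isCorner_iff_row {i : ℕ} :
    (∃ j, IsCorner μ (i, j)) ↔ 0 < μ.rowLen i ∧ μ.rowLen (i + 1) < μ.rowLen i := by
  constructor
  · rintro ⟨j, hmem, h1, h2⟩
    have hj : j < μ.rowLen i := YoungDiagram.mem_iff_lt_rowLen.mp hmem
    have hj2 : ¬(j + 1 < μ.rowLen i) := fun h => h2 (YoungDiagram.mem_iff_lt_rowLen.mpr h)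
    have hj1 : ¬(j < μ.rowLen (i + 1)) := fun h => h1 (YoungDiagram.mem_iff_lt_rowLen.mpr h)
    omega
  · rintro ⟨h1, h2⟩
    refine ⟨μ.rowLen i - 1, ?_⟩
    dsimp only [IsCorner]
    refine ⟨?_, ?_, ?_⟩ <;> · rw [YoungDiagram.mem_iff_lt_rowLen]; omega

lemma IsCorner.snd_eq {c : ℕ × ℕ} (h : IsCorner μ c) : c.2 = μ.rowLen c.1 - 1 ∧
    0 < μ.rowLen c.1 ∧ μ.rowLen (c.1 + 1) < μ.rowLen c.1 := by
  obtain ⟨hmem, h1, h2⟩ := h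
  have hj : c.2 < μ.rowLen c.1 := YoungDiagram.mem_iff_lt_rowLen.mp hmem
  have hj2 : ¬(c.2 + 1 < μ.rowLen c.1) := fun h => h2 (YoungDiagram.mem_iff_lt_rowLen.mpr h)
  have hj1 : ¬(c.2 < μ.rowLen (c.1 + 1)) := fun h => h1 (YoungDiagram.mem_iff_lt_rowLen.mpr h)
  refine ⟨by omega, by omega, by omega⟩

lemma rowLen_eraseCell {c : ℕ × ℕ} (h : IsCorner μ c) (i : ℕ) :
    (eraseCell μ c).rowLen i = if i = c.1 then μ.rowLen i - 1 else μ.rowLen i := by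
  obtain ⟨hc2, hpos, _⟩ := h.snd_eq
  by_cases hi : i = c.1
  · subst hi
    rw [if_pos rfl]
    refine rowLen_eq_of fun j => ?_
    rw [mem_eraseCell h, YoungDiagram.mem_iff_lt_rowLen]
    constructor
    · rintro ⟨hlt, hne⟩
      rcases Nat.lt_or_ge j (μ.rowLen c.1 - 1) with h' | h'
      · exact h'
      · exact absurd (by
          have : (c.1, j) = (c.1, c.2) := by
            rw [Prod.mk.injEq]
            exact ⟨rfl, by omega⟩
          simpa using this) hne
    · intro hlt
      refine ⟨by omega, fun he => ?_⟩
      have : j = c.2 := congrArg Prod.snd he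
      omega
  · rw [if_neg hi]
    refine rowLen_eq_of fun j => ?_
    rw [mem_eraseCell h, YoungDiagram.mem_iff_lt_rowLen]
    constructor
    · exact fun h' => h'.1
    · intro hlt
      exact ⟨hlt, fun he => hi (congrArg Prod.fst he)⟩

end SYTaux

namespace SYTaux

open SemistandardYoungTableau

variable {μ : YoungDiagram}

/-- Erase the corner cell from a tableau. -/
def eraseT (T : SemistandardYoungTableau μ) {c : ℕ × ℕ} (h : IsCorner μ c) :
    SemistandardYoungTableau (eraseCell μ c) where
  entry i j := if (i, j) = c then 0 else T i j
  row_weak' := by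
    intro i j1 j2 hj hcell
    rw [mem_eraseCell h] at hcell
    have hne2 : (i, j2) ≠ c := hcell.2
    have hne1 : (i, j1) ≠ c := by
      rintro rfl
      exact h.2.2 (μ.up_left_mem le_rfl (by omega) hcell.1)
    simp only [if_neg hne1, if_neg hne2]
    exact T.row_weak hj hcell.1
  col_strict' := by
    intro i1 i2 j hi hcell
    rw [mem_eraseCell h] at hcell
    have hne2 : (i2, j) ≠ c := hcell.2
    have hne1 : (i1, j) ≠ c := by
      rintro rfl
      exact h.2.1 (μ.up_left_mem (by omega) le_rfl hcell.1)
    simp only [if_neg hne1, if_neg hne2]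
    exact T.col_strict hi hcell.1
  zeros' := by
    intro i j hcell
    rw [mem_eraseCell h] at hcell
    show (if (i, j) = c then 0 else T i j) = 0
    by_cases he : (i, j) = c
    · rw [if_pos he]
    · rw [if_neg he]
      push_neg at hcell
      exact T.zeros (fun hm => he (hcell hm))

lemma isStandard_eraseT {T : SemistandardYoungTableau μ} (hT : T.IsStandard)
    {c : ℕ × ℕ} (h : IsCorner μ c) (hc : T c.1 c.2 = μ.card) :
    (eraseT T h).IsStandard := by
  intro v
  have hfil : ((eraseCell μ c).cells.filter fun x => (eraseT T h) x.1 x.2 = v)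
      = (μ.cells.filter fun x => T x.1 x.2 = v).erase c := by
    ext x
    simp only [Finset.mem_filter, Finset.mem_erase, cells_eraseCell h, Finset.mem_erase]
    constructor
    · rintro ⟨⟨hne, hmem⟩, hv⟩
      refine ⟨hne, hmem, ?_⟩
      have : (eraseT T h) x.1 x.2 = T x.1 x.2 := by
        show (if (x.1, x.2) = c then 0 else T x.1 x.2) = T x.1 x.2
        rw [if_neg (by simpa using hne)]
      rwa [this] at hv
    · rintro ⟨hne, hmem, hv⟩
      refine ⟨⟨hne, hmem⟩, ?_⟩
      show (if (x.1, x.2) = c then 0 else T x.1 x.2) = v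
      rw [if_neg (by simpa using hne)]
      exact hv
  have hcard : (eraseCell μ c).card = μ.card - 1 := card_eraseCell h
  have hN : 0 < μ.card := by
    have : c ∈ μ.cells := by simpa using h.1
    have : 0 < μ.cells.card := Finset.card_pos.mpr ⟨c, this⟩
    exact this
  rw [content, hfil, hcard]
  by_cases hv : v = μ.card
  · subst hv
    have hcmem : c ∈ μ.cells.filter fun x => T x.1 x.2 = μ.card :=
      Finset.mem_filter.mpr ⟨by simpa using h.1, hc⟩
    rw [Finset.card_erase_of_mem hcmem]
    have := hT μ.card
    rw [content] at this
    rw [this, if_pos ⟨hN, le_rfl⟩, if_neg (by omega)]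
  · have hcnot : c ∉ μ.cells.filter fun x => T x.1 x.2 = v :=
      fun hmem => hv ((Finset.mem_filter.mp hmem).2.symm.trans hc)
    rw [Finset.erase_eq_of_notMem hcnot]
    have hTv := hT v
    rw [content] at hTv
    rw [hTv]
    split_ifs <;> omega

end SYTaux

namespace SYTaux

open SemistandardYoungTableau

variable {μ : YoungDiagram}

/-- Insert the value `μ.card` at a corner cell. -/
noncomputable def insertT {c : ℕ × ℕ} (h : IsCorner μ c)
    (T' : SemistandardYoungTableau (eraseCell μ c))
    (hb : ∀ i j, T' i j < μ.card) : SemistandardYoungTableau μ where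
  entry i j := if (i, j) = c then μ.card else T' i j
  row_weak' := by
    intro i j1 j2 hj hcell
    have hne1 : (i, j1) ≠ c := by
      rintro rfl
      exact h.2.2 (μ.up_left_mem le_rfl (by omega) hcell)
    show (if (i, j1) = c then μ.card else T' i j1) ≤ (if (i, j2) = c then μ.card else T' i j2)
    rw [if_neg hne1]
    by_cases he : (i, j2) = c
    · rw [if_pos he]
      exact le_of_lt (hb i j1)
    · rw [if_neg he]
      exact T'.row_weak hj ((mem_eraseCell h).mpr ⟨hcell, he⟩)
  col_strict' := by
    intro i1 i2 j hi hcell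
    have hne1 : (i1, j) ≠ c := by
      rintro rfl
      exact h.2.1 (μ.up_left_mem (by omega) le_rfl hcell)
    show (if (i1, j) = c then μ.card else T' i1 j) < (if (i2, j) = c then μ.card else T' i2 j)
    rw [if_neg hne1]
    by_cases he : (i2, j) = c
    · rw [if_pos he]
      exact hb i1 j
    · rw [if_neg he]
      exact T'.col_strict hi ((mem_eraseCell h).mpr ⟨hcell, he⟩)
  zeros' := by
    intro i j hcell
    show (if (i, j) = c then μ.card else T' i j) = 0
    have hne : (i, j) ≠ c := by rintro rfl; exact hcell h.1
    rw [if_neg hne]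
    exact T'.zeros (by rw [mem_eraseCell h]; tauto)

lemma isStandard_insertT {c : ℕ × ℕ} (h : IsCorner μ c)
    {T' : SemistandardYoungTableau (eraseCell μ c)} (hT' : T'.IsStandard)
    (hb : ∀ i j, T' i j < μ.card) : (insertT h T' hb).IsStandard := by
  intro v
  have hN : 0 < μ.card := Finset.card_pos.mpr ⟨c, by simpa using h.1⟩
  have hcard : (eraseCell μ c).card = μ.card - 1 := card_eraseCell h
  have hcells : μ.cells = insert c (eraseCell μ c).cells := by
    rw [cells_eraseCell h, Finset.insert_erase (by simpa using h.1)]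
  have hfil : (μ.cells.filter fun x => (insertT h T' hb) x.1 x.2 = v)
      = if μ.card = v then insert c ((eraseCell μ c).cells.filter fun x => T' x.1 x.2 = v)
        else ((eraseCell μ c).cells.filter fun x => T' x.1 x.2 = v) := by
    rw [hcells, Finset.filter_insert]
    have hval : (insertT h T' hb) c.1 c.2 = μ.card := by
      show (if (c.1, c.2) = c then μ.card else T' c.1 c.2) = μ.card
      rw [if_pos (by simp)]
    have hcong : ((eraseCell μ c).cells.filter fun x => (insertT h T' hb) x.1 x.2 = v)
        = ((eraseCell μ c).cells.filter fun x => T' x.1 x.2 = v) := by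
      refine Finset.filter_congr fun x hx => ?_
      have hne : (x.1, x.2) ≠ c := by
        rw [cells_eraseCell h] at hx
        simpa using (Finset.mem_erase.mp hx).1
      show ((if (x.1, x.2) = c then μ.card else T' x.1 x.2) = v) ↔ _
      rw [if_neg hne]
    rw [hval, hcong]
  rw [content, hfil]
  by_cases hv : μ.card = v
  · rw [if_pos hv]
    have hnot : c ∉ ((eraseCell μ c).cells.filter fun x => T' x.1 x.2 = v) := by
      intro hmem
      have := (Finset.mem_filter.mp hmem).1
      rw [cells_eraseCell h] at this
      exact (Finset.mem_erase.mp this).1 rfl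
    rw [Finset.card_insert_of_notMem hnot]
    have := hT' v
    rw [content, hcard] at this
    rw [this]
    split_ifs <;> omega
  · rw [if_neg hv]
    have := hT' v
    rw [content, hcard] at this
    rw [this]
    split_ifs <;> omega

end SYTaux

namespace SYTaux

open SemistandardYoungTableau

variable {μ : YoungDiagram}

lemma exists_max_cell {T : SemistandardYoungTableau μ} (hT : T.IsStandard) (hN : 0 < μ.card) :
    ∃ c : ℕ × ℕ, IsCorner μ c ∧ T c.1 c.2 = μ.card ∧
      ∀ x ∈ μ.cells, T x.1 x.2 = μ.card → x = c := by
  have h1 : T.content μ.card = 1 := by rw [hT]; rw [if_pos ⟨hN, le_rfl⟩]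
  rw [content, Finset.card_eq_one] at h1
  obtain ⟨c, hc⟩ := h1
  have hcmem : c ∈ μ.cells.filter fun x => T x.1 x.2 = μ.card := by rw [hc]; simp
  obtain ⟨hcm, hcv⟩ := Finset.mem_filter.mp hcmem
  have hcm' : c ∈ μ := (μ.mem_cells c).mp hcm
  have huniq : ∀ x ∈ μ.cells, T x.1 x.2 = μ.card → x = c := by
    intro x hx hxv
    have : x ∈ μ.cells.filter fun y => T y.1 y.2 = μ.card := Finset.mem_filter.mpr ⟨hx, hxv⟩
    rw [hc] at this
    simpa using this
  refine ⟨c, ⟨hcm', ?_, ?_⟩, hcv, huniq⟩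
  · intro hmem
    have hlt : T c.1 c.2 < T (c.1 + 1) c.2 := T.col_strict (Nat.lt_succ_self _) hmem
    have hle : T (c.1 + 1) c.2 ≤ μ.card := std_entry_le hT hmem
    omega
  · intro hmem
    have hle1 : T c.1 c.2 ≤ T c.1 (c.2 + 1) := T.row_weak (Nat.lt_succ_self _) hmem
    have hle : T c.1 (c.2 + 1) ≤ μ.card := std_entry_le hT hmem
    have heq : T c.1 (c.2 + 1) = μ.card := by omega
    have := huniq (c.1, c.2 + 1) ((μ.mem_cells _).mpr hmem) heq
    have := congrArg Prod.snd this
    simp at this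

/-- The counting recurrence. -/
lemma numSYT_rec (hN : 0 < μ.card) :
    numSYT μ = ∑ c ∈ cornersFinset μ, numSYT (eraseCell μ c) := by
  classical
  -- the inverse direction map is a bijection
  set F : (Σ c : {c : ℕ × ℕ // c ∈ cornersFinset μ},
      {T' : SemistandardYoungTableau (eraseCell μ c.1) // T'.IsStandard}) →
      {T : SemistandardYoungTableau μ // T.IsStandard} := fun p =>
    ⟨insertT (mem_cornersFinset.mp p.1.2) p.2.1
      (fun i j => by
        have h := mem_cornersFinset.mp p.1.2
        have h1 := std_entry_le' p.2.2 i j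
        have h2 := card_eraseCell h
        omega),
      isStandard_insertT _ p.2.2 _⟩ with hF
  have hbij : Function.Bijective F := by
    constructor
    · rintro ⟨⟨c, hc⟩, T'⟩ ⟨⟨d, hd⟩, S'⟩ heq
      have hc' := mem_cornersFinset.mp hc
      have hd' := mem_cornersFinset.mp hd
      have heq' : ∀ i j, (F ⟨⟨c, hc⟩, T'⟩).1 i j = (F ⟨⟨d, hd⟩, S'⟩).1 i j := by
        intro i j
        rw [heq]
      have hcd : c = d := by
        by_contra hne
        have h1 : (F ⟨⟨c, hc⟩, T'⟩).1 c.1 c.2 = μ.card := by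
          show (if (c.1, c.2) = c then μ.card else _) = μ.card
          rw [if_pos (by simp)]
        have h2 : (F ⟨⟨d, hd⟩, S'⟩).1 c.1 c.2 < μ.card := by
          show (if (c.1, c.2) = d then μ.card else S'.1 c.1 c.2) < μ.card
          rw [if_neg (by simpa using hne)]
          have h1 := std_entry_le' S'.2 c.1 c.2
          dsimp only at h1
          have h2 := card_eraseCell hd'
          have hNN : 0 < μ.card := hN
          omega
        rw [heq' c.1 c.2] at h1
        omega
      subst hcd
      have hTS : T' = S' := by
        apply Subtype.ext
        ext i j
        by_cases he : (i, j) = c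
        · have hni : (i, j) ∉ eraseCell μ c := by
            rw [mem_eraseCell hc']
            tauto
          rw [T'.1.zeros hni, S'.1.zeros hni]
        · show T'.1 i j = S'.1 i j
          have h1 : (F ⟨⟨c, hc⟩, T'⟩).1 i j = T'.1 i j := by
            show (if (i, j) = c then μ.card else _) = _
            rw [if_neg he]
          have h2 : (F ⟨⟨c, hd⟩, S'⟩).1 i j = S'.1 i j := by
            show (if (i, j) = c then μ.card else _) = _
            rw [if_neg he]
          rw [← h1, ← h2]
          rw [heq]
      rw [hTS]
    · rintro ⟨T, hT⟩
      obtain ⟨c, hcorn, hcv, huniq⟩ := exists_max_cell hT hN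
      refine ⟨⟨⟨c, mem_cornersFinset.mpr hcorn⟩, ⟨eraseT T hcorn, isStandard_eraseT hT hcorn hcv⟩⟩, ?_⟩
      apply Subtype.ext
      ext i j
      show (if (i, j) = c then μ.card else (if (i, j) = c then 0 else T i j)) = T i j
      by_cases he : (i, j) = c
      · rw [if_pos he]
        have h1 : i = c.1 := congrArg Prod.fst he
        have h2 : j = c.2 := congrArg Prod.snd he
        rw [h1, h2, hcv]
      · rw [if_neg he, if_neg he]
  have hcard := Nat.card_eq_of_bijective F hbij
  rw [numSYT, ← hcard]
  -- now compute the card of the sigma type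
  letI : ∀ c : {c : ℕ × ℕ // c ∈ cornersFinset μ},
      Fintype {T' : SemistandardYoungTableau (eraseCell μ c.1) // T'.IsStandard} :=
    fun c => Fintype.ofFinite _
  rw [Nat.card_eq_fintype_card]
  rw [Fintype.card_sigma]
  rw [← Finset.sum_coe_sort (cornersFinset μ) (fun c => numSYT (eraseCell μ c))]
  refine Finset.sum_congr rfl fun c _ => ?_
  rw [numSYT, Nat.card_eq_fintype_card]

end SYTaux

namespace SYTaux

open SemistandardYoungTableau

variable {μ : YoungDiagram}

lemma numSYT_card_zero (h : μ.card = 0) : numSYT μ = 1 := by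
  have hcells : μ.cells = ∅ := Finset.card_eq_zero.mp h
  have hmem : ∀ x : ℕ × ℕ, x ∉ μ := fun x hx => by
    have : x ∈ μ.cells := (μ.mem_cells x).mpr hx
    simp [hcells] at this
  letI : Unique {T : SemistandardYoungTableau μ // T.IsStandard} :=
    { default := ⟨⟨fun _ _ => 0, fun {i j1 j2} _ hc => absurd hc (hmem _),
        fun {i1 i2 j} _ hc => absurd hc (hmem _), fun {i j} _ => rfl⟩, by
        intro v
        have : (μ.cells.filter fun c => (0:ℕ) = v).card = 0 := by
          rw [hcells]; simp
        rw [content, h]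
        simp only [hcells, Finset.filter_empty, Finset.card_empty]
        rw [if_neg (by omega)]⟩
      uniq := by
        rintro ⟨T, hT⟩
        apply Subtype.ext
        ext i j
        exact T.zeros (hmem _) }
  rw [numSYT, Nat.card_unique]

lemma card_eq_sum_rowLen (m : ℕ) (hm : ∀ i, m ≤ i → μ.rowLen i = 0) :
    μ.card = ∑ i ∈ Finset.range m, μ.rowLen i := by
  have hsub : μ.cells = (Finset.range m).biUnion (fun i => μ.row i) := by
    ext x
    simp only [Finset.mem_biUnion, Finset.mem_range]
    constructor
    · intro hx
      have hx' : x ∈ μ := (μ.mem_cells x).mp hx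
      refine ⟨x.1, ?_, ?_⟩
      · by_contra hc
        push_neg at hc
        have h0 := hm x.1 hc
        have : x.2 < μ.rowLen x.1 := YoungDiagram.mem_iff_lt_rowLen.mp (by
          have : (x.1, x.2) = x := rfl
          rwa [this])
        omega
      · rw [YoungDiagram.mem_row_iff]
        exact ⟨hx', rfl⟩
    · rintro ⟨i, _, hx⟩
      exact (μ.mem_cells x).mpr (YoungDiagram.mem_row_iff.mp hx).1
  have hdisj : ∀ i ∈ Finset.range m, ∀ j ∈ Finset.range m, i ≠ j →
      Disjoint (μ.row i) (μ.row j) := by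
    intro i _ j _ hij
    refine Finset.disjoint_left.mpr fun x hxi hxj => ?_
    rw [YoungDiagram.mem_row_iff] at hxi hxj
    exact hij (hxi.2 ▸ hxj.2 ▸ rfl)
  show μ.cells.card = _
  rw [hsub, Finset.card_biUnion hdisj]
  exact Finset.sum_congr rfl fun i _ => (μ.rowLen_eq_card (i := i)).symm

end SYTaux

section AlgPart
open Finset Matrix

noncomputable def Rf (z : ℤ) : ℚ := if 0 ≤ z then ((z.toNat).factorial : ℚ)⁻¹ else 0

lemma Rf_sub_one (z : ℤ) : Rf (z - 1) = z * Rf z := by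
  rcases lt_trichotomy z 0 with h | h | h
  · rw [Rf, Rf, if_neg (by omega), if_neg (by omega), mul_zero]
  · subst h; simp [Rf]
  · rw [Rf, Rf, if_pos (by omega), if_pos (by omega)]
    have hz : z.toNat = (z - 1).toNat + 1 := by omega
    rw [hz, Nat.factorial_succ]
    have h1 : ((z - 1).toNat + 1 : ℚ) = (z : ℚ) := by
      have : (((z - 1).toNat + 1 : ℕ) : ℚ) = ((z : ℤ) : ℚ) := by
        rw [← hz]; norm_cast; omega
      push_cast at this ⊢; linarith
    push_cast
    rw [mul_inv, ← h1]
    field_simp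

lemma Rf_nonneg_arg {z : ℤ} (h : 0 ≤ z) : Rf z = ((z.toNat).factorial : ℚ)⁻¹ := if_pos h

lemma Rf_neg_arg {z : ℤ} (h : z < 0) : Rf z = 0 := if_neg (by omega)

/-- sum over rows of det with row i multiplied entrywise by column weights. -/
lemma sum_det_updateRow_colwt {m : ℕ} (A : Matrix (Fin m) (Fin m) ℚ) (w : Fin m → ℚ) :
    ∑ i, (A.updateRow i (fun j => w j * A i j)).det = (∑ j, w j) * A.det := by
  simp only [det_apply']
  rw [Finset.sum_comm]
  rw [Finset.mul_sum]
  refine Finset.sum_congr rfl fun σ _ => ?_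
  have key : ∀ r : Fin m, ∏ i, (A.updateRow r (fun j => w j * A r j)) (σ i) i
      = w (σ⁻¹ r) * ∏ i, A (σ i) i := by
    intro r
    have h1 : ∀ i : Fin m, (A.updateRow r (fun j => w j * A r j)) (σ i) i
        = Function.update (fun i => A (σ i) i) (σ⁻¹ r) (w (σ⁻¹ r) * A (σ (σ⁻¹ r)) (σ⁻¹ r)) i := by
      intro i
      by_cases hi : i = σ⁻¹ r
      · subst hi
        rw [Function.update_self]
        have : σ (σ⁻¹ r) = r := σ.apply_symm_apply r
        rw [this, Matrix.updateRow_self]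
      · have : σ i ≠ r := fun h => hi (by simp [← h])
        rw [Matrix.updateRow_ne this, Function.update_of_ne hi]
    rw [Finset.prod_congr rfl (fun i _ => h1 i)]
    rw [Finset.prod_update_of_mem (Finset.mem_univ _)]
    rw [show σ (σ⁻¹ r) = r from σ.apply_symm_apply r]
    rw [mul_assoc]
    congr 1
    rw [← Finset.prod_update_of_mem (Finset.mem_univ (σ⁻¹ r))]
    · refine Finset.prod_congr rfl fun i _ => ?_
      by_cases hi : i = σ⁻¹ r
      · subst hi; rw [Function.update_self, show σ (σ⁻¹ r) = r from σ.apply_symm_apply r]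
      · rw [Function.update_of_ne hi]
  simp only [key]
  rw [← Finset.mul_sum, ← Finset.sum_mul]
  have : ∑ r, w (σ⁻¹ r) = ∑ j, w j := Fintype.sum_equiv σ⁻¹ _ _ (fun _ => rfl)
  rw [this]
  ring

/-- The factorial-reciprocal matrix attached to a row-length vector. -/
noncomputable def Mfr (m : ℕ) (l : ℕ → ℕ) : Matrix (Fin m) (Fin m) ℚ :=
  Matrix.of fun i j => Rf ((l i : ℤ) + j - i)

/-- Decremented-row matrix. -/
noncomputable def MfrDec (m : ℕ) (l : ℕ → ℕ) (r : Fin m) : Matrix (Fin m) (Fin m) ℚ :=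
  Matrix.of fun i j => Rf ((l i : ℤ) - (if i = r then 1 else 0) + j - i)

lemma sum_det_MfrDec (m : ℕ) (l : ℕ → ℕ) :
    ∑ r : Fin m, (MfrDec m l r).det = (∑ i : Fin m, (l i : ℚ)) * (Mfr m l).det := by
  have hrow : ∀ r : Fin m, MfrDec m l r =
      (Mfr m l).updateRow r
        ((((l r : ℚ) - r) • (Mfr m l r)) + fun j : Fin m => (j : ℚ) * (Mfr m l) r j) := by
    intro r
    ext i j
    by_cases hi : i = r
    · subst hi
      rw [Matrix.updateRow_self]
      simp only [Pi.add_apply, Pi.smul_apply, smul_eq_mul]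
      have h2 : ((l (i:ℕ) : ℤ) - (if i = i then 1 else 0) + j - i) = ((l (i:ℕ) : ℤ) + j - i) - 1 := by
        simp; ring
      show Rf ((l (i:ℕ) : ℤ) - (if i = i then 1 else 0) + j - i) = _
      rw [h2, Rf_sub_one]
      show ((((l (i:ℕ) : ℤ) + j - i) : ℤ) : ℚ) * Rf ((l (i:ℕ) : ℤ) + j - i)
        = ((l (i:ℕ) : ℚ) - i) * Rf ((l (i:ℕ) : ℤ) + j - i) + (j:ℚ) * Rf ((l (i:ℕ) : ℤ) + j - i)
      push_cast
      ring
    · rw [Matrix.updateRow_ne hi]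
      simp [MfrDec, Mfr, hi]
  calc ∑ r : Fin m, (MfrDec m l r).det
      = ∑ r : Fin m, (((l r : ℚ) - r) * (Mfr m l).det
          + ((Mfr m l).updateRow r fun j => (j : ℚ) * (Mfr m l) r j).det) := by
        refine Finset.sum_congr rfl fun r _ => ?_
        rw [hrow r, Matrix.det_updateRow_add, Matrix.det_updateRow_smul,
          Matrix.updateRow_eq_self]
    _ = (∑ r : Fin m, ((l r : ℚ) - r)) * (Mfr m l).det
          + (∑ j : Fin m, (j : ℚ)) * (Mfr m l).det := by
        rw [Finset.sum_add_distrib, ← Finset.sum_mul,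
          sum_det_updateRow_colwt (Mfr m l) (fun j => (j : ℚ))]
    _ = (∑ i : Fin m, (l i : ℚ)) * (Mfr m l).det := by
        rw [← add_mul]
        congr 1
        rw [Finset.sum_sub_distrib]
        ring

lemma factorial_mul_Rf : ∀ (k : ℕ) (z : ℤ), 0 ≤ z + k →
    (((z + k).toNat).factorial : ℚ) * Rf z = ∏ t ∈ Finset.range k, ((z : ℚ) + t + 1)
  | 0, z, hz => by
    simp only [Nat.cast_zero, add_zero] at hz ⊢
    rw [Rf_nonneg_arg hz, Finset.range_zero, Finset.prod_empty]
    exact mul_inv_cancel₀ (by exact_mod_cast (Nat.factorial_pos _).ne')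
  | (k+1), z, hz => by
    have h1 : Rf z = ((z:ℚ) + 1) * Rf (z + 1) := by
      have h := Rf_sub_one (z + 1)
      rw [add_sub_cancel_right] at h
      rw [h]; push_cast; ring
    have h2 : 0 ≤ (z + 1) + k := by push_cast at hz ⊢; omega
    have IH := factorial_mul_Rf k (z + 1) h2
    have h3 : (z + 1) + (k : ℤ) = z + ((k : ℕ) + 1 : ℕ) := by push_cast; ring
    rw [h3] at IH
    rw [h1, ← mul_assoc, mul_comm (((z + ((k:ℕ)+1:ℕ)).toNat.factorial : ℚ)) ((z:ℚ)+1), mul_assoc,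
      IH, Finset.prod_range_succ']
    have h5 : ∀ t : ℕ, ((z + 1 : ℤ) : ℚ) + t + 1 = (z:ℚ) + ((t:ℕ)+1:ℕ) + 1 := by
      intro t; push_cast; ring
    rw [Finset.prod_congr rfl fun t _ => h5 t, mul_comm]
    push_cast
    ring

open Polynomial in
lemma det_Mfr_rect (n m' : ℕ) (hn : 1 ≤ n) :
    (∏ j : Fin (m' + 1), ((n + (j:ℕ)).factorial : ℚ)) * (Mfr (m' + 1) (fun _ => n)).det
      = (Nat.superFactorial m' : ℚ) := by
  set m := m' + 1
  set v : Fin m → ℚ := fun i => (n : ℚ) + i with hv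
  set p : Fin m → ℚ[X] := fun j => ∏ t ∈ Finset.range (j : ℕ), (X + C ((t : ℚ) + 1 - (j : ℕ))) with hp
  have hmonic : ∀ j, (p j).Monic := fun j => monic_prod_of_monic _ _ fun t _ => monic_X_add_C _
  have hdeg : ∀ j, (p j).natDegree = (j : ℕ) := by
    intro j
    rw [hp]
    rw [Polynomial.natDegree_prod _ _ (fun t _ => (monic_X_add_C _).ne_zero)]
    simp only [Polynomial.natDegree_X_add_C]
    simp
  have hentry : ∀ i j : Fin m, ((n + (i:ℕ)).factorial : ℚ) * Rf ((n : ℤ) + i - j)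
      = (p j).eval (v i) := by
    intro i j
    have hz : (0:ℤ) ≤ ((n : ℤ) + i - j) + (j : ℕ) := by push_cast; omega
    have := factorial_mul_Rf (j : ℕ) ((n : ℤ) + i - j) hz
    have harg : (((n : ℤ) + i - j) + (j:ℕ)).toNat = n + (i:ℕ) := by push_cast; omega
    rw [harg] at this
    rw [this, hp]
    rw [Polynomial.eval_prod]
    refine Finset.prod_congr rfl fun t _ => ?_
    simp only [eval_add, eval_X, eval_C, hv]
    push_cast
    ring
  have hB : Matrix.det (Matrix.of fun i j : Fin m => (p j).eval (v i))
      = (∏ j : Fin m, ((n + (j:ℕ)).factorial : ℚ)) * (Mfr m (fun _ => n)).det := by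
    have : (Matrix.of fun i j : Fin m => (p j).eval (v i))
        = (Matrix.of fun i j : Fin m => ((n + (i:ℕ)).factorial : ℚ)
            * (Matrix.transpose (Mfr m (fun _ => n))) i j) := by
      ext i j
      simp only [Matrix.of_apply, Matrix.transpose_apply]
      rw [← hentry i j]
      simp only [Matrix.of_apply, Mfr]
    rw [this]
    have h4 : (Matrix.of fun i j : Fin m => ((n + (i:ℕ)).factorial : ℚ)
            * (Matrix.transpose (Mfr m (fun _ => n))) i j)
        = Matrix.transpose (Matrix.of fun i j : Fin m => ((n + (j:ℕ)).factorial : ℚ)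
            * (Mfr m (fun _ => n)) i j) := by
      ext i j; simp
    rw [h4, Matrix.det_transpose, Matrix.det_mul_row]
  have hvd := Matrix.det_eval_matrixOfPolynomials_eq_det_vandermonde v p hdeg hmonic
  have hvd2 : (Matrix.vandermonde v).det = (Nat.superFactorial m' : ℚ) := by
    have : Matrix.vandermonde v = Matrix.vandermonde (fun i : Fin m => ((i:ℕ) : ℚ) + (n:ℚ)) := by
      unfold v; ext i j; simp [Matrix.vandermonde]; ring_nf
    rw [this, Matrix.det_vandermonde_add]
    exact Matrix.det_vandermonde_id_eq_superFactorial m'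
  rw [← hB, ← hvd, hvd2]
end AlgPart

namespace SYTaux

open Finset Matrix

lemma Rf_zero : Rf 0 = 1 := by
  rw [Rf_nonneg_arg le_rfl]
  simp

lemma isCorner_row {μ : YoungDiagram} {i : ℕ} (h1 : 0 < μ.rowLen i)
    (h2 : μ.rowLen (i + 1) < μ.rowLen i) : IsCorner μ (i, μ.rowLen i - 1) := by
  dsimp only [IsCorner]
  refine ⟨?_, ?_, ?_⟩ <;> · rw [YoungDiagram.mem_iff_lt_rowLen]; omega

theorem numSYT_eq_det : ∀ (N : ℕ) (μ : YoungDiagram), μ.card = N → ∀ m : ℕ,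
    (∀ i, m ≤ i → μ.rowLen i = 0) →
    (numSYT μ : ℚ) = (μ.card).factorial * (Mfr m μ.rowLen).det := by
  intro N
  induction N using Nat.strong_induction_on with
  | _ N IH =>
    intro μ hcard m hm
    rcases Nat.eq_zero_or_pos N with h0 | hpos
    · -- base case: empty diagram
      subst h0
      have hcells : μ.cells = ∅ := Finset.card_eq_zero.mp hcard
      have hrl : ∀ i, μ.rowLen i = 0 := by
        intro i
        refine rowLen_eq_of fun j => ?_
        constructor
        · intro hmem
          have : (i, j) ∈ μ.cells := (μ.mem_cells _).mpr hmem
          simp [hcells] at this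
        · omega
      have htri : (Mfr m μ.rowLen).BlockTriangular id := by
        intro i j hij
        show Rf ((μ.rowLen i : ℤ) + j - i) = 0
        rw [hrl]
        refine Rf_neg_arg ?_
        have : (j : ℕ) < (i : ℕ) := hij
        push_cast
        omega
      rw [Matrix.det_of_upperTriangular htri]
      have hdiag : ∀ i : Fin m, (Mfr m μ.rowLen) i i = 1 := by
        intro i
        show Rf ((μ.rowLen i : ℤ) + i - i) = 1
        rw [hrl]
        simpa using Rf_zero
      rw [Finset.prod_congr rfl fun i _ => hdiag i, Finset.prod_const_one]
      rw [numSYT_card_zero hcard, hcard]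
      simp
    · -- inductive step
      have hcard' : 0 < μ.card := by omega
      have hanti : ∀ i : ℕ, μ.rowLen (i + 1) ≤ μ.rowLen i :=
        fun i => μ.rowLen_anti i (i + 1) (by omega)
      have hm0 : 0 < m := by
        by_contra h
        push_neg at h
        interval_cases m
        have : μ.rowLen 0 = 0 := hm 0 le_rfl
        have : μ.card = 0 := by
          rw [card_eq_sum_rowLen 0 hm]
          simp
        omega
      have hltm : ∀ c ∈ cornersFinset μ, c.1 < m := by
        intro c hc
        obtain ⟨_, hpos2, _⟩ := (mem_cornersFinset.mp hc).snd_eq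
        by_contra hge
        push_neg at hge
        rw [hm c.1 hge] at hpos2
        omega
      set P : Fin m → Prop :=
        fun r => 0 < μ.rowLen r ∧ μ.rowLen ((r : ℕ) + 1) < μ.rowLen r with hP
      have hreindex : ∑ c ∈ cornersFinset μ, (numSYT (eraseCell μ c) : ℚ)
          = ∑ r ∈ Finset.univ.filter P,
              (numSYT (eraseCell μ ((r : ℕ), μ.rowLen r - 1)) : ℚ) := by
        refine Finset.sum_nbij' (i := fun c => if hcm : c ∈ cornersFinset μ then
            (⟨c.1, hltm c hcm⟩ : Fin m) else ⟨0, hm0⟩)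
          (j := fun r => ((r : ℕ), μ.rowLen r - 1)) ?_ ?_ ?_ ?_ ?_
        · intro c hc
          rw [dif_pos hc]
          obtain ⟨hsnd, hpos2, hlt2⟩ := (mem_cornersFinset.mp hc).snd_eq
          simp only [Finset.mem_filter, Finset.mem_univ, true_and, hP]
          exact ⟨hpos2, hlt2⟩
        · intro r hr
          simp only [Finset.mem_filter, Finset.mem_univ, true_and, hP] at hr
          exact mem_cornersFinset.mpr (isCorner_row hr.1 hr.2)
        · intro c hc
          rw [dif_pos hc]
          obtain ⟨hsnd, _, _⟩ := (mem_cornersFinset.mp hc).snd_eq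
          exact (Prod.ext rfl hsnd.symm)
        · intro r hr
          simp only [Finset.mem_filter, Finset.mem_univ, true_and, hP] at hr
          dsimp only
          rw [dif_pos (mem_cornersFinset.mpr (isCorner_row hr.1 hr.2))]
        · intro c hc
          rw [dif_pos hc]
          obtain ⟨hsnd, _, _⟩ := (mem_cornersFinset.mp hc).snd_eq
          have hcc : (((⟨c.1, hltm c hc⟩ : Fin m) : ℕ), μ.rowLen ((⟨c.1, hltm c hc⟩ : Fin m) : ℕ) - 1)
              = c := by
            dsimp only
            exact Prod.ext rfl hsnd.symm
          rw [hcc]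
      -- apply the induction hypothesis to each term
      have hIH : ∀ r ∈ Finset.univ.filter P,
          (numSYT (eraseCell μ ((r : ℕ), μ.rowLen r - 1)) : ℚ)
            = (N - 1).factorial * (MfrDec m μ.rowLen r).det := by
        intro r hr
        simp only [Finset.mem_filter, Finset.mem_univ, true_and, hP] at hr
        have hcorn : IsCorner μ ((r : ℕ), μ.rowLen r - 1) := isCorner_row hr.1 hr.2
        have hcarde : (eraseCell μ ((r : ℕ), μ.rowLen r - 1)).card = N - 1 := by
          rw [card_eraseCell hcorn, hcard]
        have hrows : ∀ i, m ≤ i → (eraseCell μ ((r : ℕ), μ.rowLen r - 1)).rowLen i = 0 := by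
          intro i hi
          rw [rowLen_eraseCell hcorn i]
          have : i ≠ (r : ℕ) := by have := r.2; omega
          rw [if_neg this]
          exact hm i hi
        have := IH (N - 1) (by omega) _ hcarde m hrows
        rw [this, hcarde]
        congr 2
        ext i j
        show Rf (((eraseCell μ ((r : ℕ), μ.rowLen r - 1)).rowLen i : ℤ) + j - i)
          = Rf ((μ.rowLen i : ℤ) - (if i = r then 1 else 0) + j - i)
        rw [rowLen_eraseCell hcorn (i : ℕ)]
        by_cases hir : (i : ℕ) = (r : ℕ)
        · have hfin : i = r := Fin.ext hir
          rw [if_pos hir, if_pos hfin]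
          congr 1
          have h1 : 0 < μ.rowLen (i : ℕ) := by rw [hir]; exact hr.1
          push_cast [Nat.cast_sub h1]
          ring
        · have hfin : i ≠ r := fun h => hir (congrArg Fin.val h)
          rw [if_neg hir, if_neg hfin]
          congr 1
          try ring
      -- vanishing of non-corner terms
      have hzero : ∀ r : Fin m, ¬ P r → (MfrDec m μ.rowLen r).det = 0 := by
        intro r hnp
        simp only [hP] at hnp
        push_neg at hnp
        by_cases hr1 : (r : ℕ) + 1 < m
        · have hll : μ.rowLen ((r : ℕ) + 1) = μ.rowLen (r : ℕ) := by
            have h1 := hanti (r : ℕ)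
            by_cases h2 : 0 < μ.rowLen (r : ℕ)
            · have := hnp h2
              omega
            · omega
          refine Matrix.det_zero_of_row_eq (i := r) (j := ⟨(r : ℕ) + 1, hr1⟩)
            (Fin.ne_of_val_ne (show (r : ℕ) ≠ (r : ℕ) + 1 by omega)) ?_
          funext j
          show Rf ((μ.rowLen r : ℤ) - (if r = r then 1 else 0) + j - r)
            = Rf ((μ.rowLen ((r : ℕ) + 1) : ℤ) - (if (⟨(r : ℕ) + 1, hr1⟩ : Fin m) = r then 1 else 0)
                + j - ((r : ℕ) + 1))
          rw [if_pos rfl, if_neg (Fin.ne_of_val_ne (show (r : ℕ) + 1 ≠ (r : ℕ) by omega)), hll]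
          congr 1
          push_cast
          ring
        · have hr2 : μ.rowLen ((r : ℕ) + 1) = 0 := hm _ (by omega)
          have hr0 : μ.rowLen (r : ℕ) = 0 := by
            by_cases h2 : 0 < μ.rowLen (r : ℕ)
            · have := hnp h2; omega
            · omega
          apply Matrix.det_eq_zero_of_row_eq_zero r
          intro j
          show Rf ((μ.rowLen r : ℤ) - (if r = r then 1 else 0) + j - r) = 0
          rw [if_pos rfl, hr0]
          apply Rf_neg_arg
          have hj : (j : ℕ) < m := j.2
          have hrm : (r : ℕ) + 1 = m := by have := r.2; omega
          push_cast
          omega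
      have hvanish : ∑ r ∈ Finset.univ.filter P, (MfrDec m μ.rowLen r).det
          = ∑ r : Fin m, (MfrDec m μ.rowLen r).det := by
        refine Finset.sum_filter_of_ne fun r _ hne => ?_
        by_contra hnp
        exact hne (hzero r hnp)
      have hsum : (∑ i : Fin m, (μ.rowLen (i : ℕ) : ℚ)) = (N : ℚ) := by
        rw [← Nat.cast_sum]
        norm_cast
        rw [Fin.sum_univ_eq_sum_range (fun i => μ.rowLen i) m]
        rw [← card_eq_sum_rowLen m hm, hcard]
      have hrec := numSYT_rec hcard'
      have hcast : (numSYT μ : ℚ) = ∑ c ∈ cornersFinset μ, (numSYT (eraseCell μ c) : ℚ) := by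
        rw [hrec]
        push_cast
        rfl
      rw [hcast, hreindex, Finset.sum_congr rfl hIH, ← Finset.mul_sum, hvanish,
        sum_det_MfrDec m μ.rowLen, hsum, hcard]
      rw [show N.factorial = N * (N - 1).factorial from by
        cases N with
        | zero => omega
        | succ k => simp [Nat.factorial_succ]]
      push_cast
      ring



lemma mem_rect {w n : ℕ} {x : ℕ × ℕ} : x ∈ rectDiagram w n ↔ x.1 < n ∧ x.2 < w := by
  show x ∈ (Finset.range n ×ˢ Finset.range w) ↔ _
  simp [Finset.mem_product]

lemma rowLen_rect {w n : ℕ} (i : ℕ) :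
    (rectDiagram w n).rowLen i = if i < n then w else 0 := by
  refine rowLen_eq_of fun j => ?_
  rw [mem_rect]
  constructor
  · rintro ⟨h1, h2⟩
    rw [if_pos h1]; exact h2
  · intro hj
    by_cases h1 : i < n
    · rw [if_pos h1] at hj; exact ⟨h1, hj⟩
    · rw [if_neg h1] at hj; omega

lemma card_rect (w n : ℕ) : (rectDiagram w n).card = n * w := by
  show (Finset.range n ×ˢ Finset.range w).card = n * w
  rw [Finset.card_product, Finset.card_range, Finset.card_range]

lemma superfac_eq (k : ℕ) : superfac k = Nat.superFactorial k := by
  rw [superfac, Nat.prod_range_factorial_succ]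

theorem numSYT_rect_eq' (n m : ℕ) (hn : 1 ≤ n) (hm : 1 ≤ m) :
    numSYT (rectDiagram n m) =
      Nat.factorial (m * n) * superfac (m - 1) * superfac (n - 1) / superfac (m + n - 1) := by
  obtain ⟨m', rfl⟩ : ∃ m', m = m' + 1 := ⟨m - 1, by omega⟩
  set m := m' + 1
  -- the rational identity
  have h1 := numSYT_eq_det ((rectDiagram n m).card) (rectDiagram n m) rfl m
    (fun i hi => by rw [rowLen_rect, if_neg (by omega)])
  have hMM : Mfr m (rectDiagram n m).rowLen = Mfr m (fun _ => n) := by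
    ext i j
    show Rf (((rectDiagram n m).rowLen i : ℤ) + j - i) = Rf ((n : ℤ) + j - i)
    rw [rowLen_rect, if_pos i.2]
  rw [hMM, card_rect] at h1
  have h2 := det_Mfr_rect n m' hn
  -- multiply h1 by the product of factorials
  have h3 : (numSYT (rectDiagram n m) : ℚ) * (∏ j : Fin m, ((n + (j:ℕ)).factorial : ℚ))
      = (m * n).factorial * (Nat.superFactorial m' : ℚ) := by
    rw [h1, ← h2]
    ring
  have h4 : (numSYT (rectDiagram n m) * ∏ j ∈ Finset.range m, (n + j).factorial : ℕ)
      = ((m * n).factorial * Nat.superFactorial m' : ℕ) := by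
    rw [← Fin.prod_univ_eq_prod_range (fun j => (n + j).factorial) m]
    exact_mod_cast h3
  -- superfactorial splitting
  have h5 : superfac (m + n - 1) = superfac (n - 1) * ∏ j ∈ Finset.range m, (n + j).factorial := by
    have hmn : m + n - 1 = (n - 1) + m := by omega
    rw [hmn, superfac, superfac, Finset.prod_range_add]
    congr 1
    refine Finset.prod_congr rfl fun j _ => ?_
    congr 1
    omega
  have hpos : 0 < superfac (n - 1) * ∏ j ∈ Finset.range m, (n + j).factorial := by
    apply Nat.mul_pos
    · exact Finset.prod_pos fun i _ => Nat.factorial_pos _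
    · exact Finset.prod_pos fun i _ => Nat.factorial_pos _
  rw [h5, superfac_eq (m - 1)]
  have hms : m - 1 = m' := by omega
  rw [hms]
  rw [show Nat.factorial (m * n) * Nat.superFactorial m' * superfac (n - 1)
      = (numSYT (rectDiagram n m) * ∏ j ∈ Finset.range m, (n + j).factorial) * superfac (n - 1) from by
    rw [h4]]
  rw [show (numSYT (rectDiagram n m) * ∏ j ∈ Finset.range m, (n + j).factorial) * superfac (n - 1)
      = numSYT (rectDiagram n m) * (superfac (n - 1) * ∏ j ∈ Finset.range m, (n + j).factorial) from by
    ring]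
  exact (Nat.mul_div_cancel _ hpos).symm

end SYTaux

/-- The number of standard Young tableaux of rectangular shape with `n` columns and `m` rows is
`(mn)! · s(m−1) · s(n−1) / s(m+n−1)`, where `s` is the superfactorial. -/
theorem numSYT_rect_eq (n m : ℕ) (hn : 1 ≤ n) (hm : 1 ≤ m) :
    numSYT (rectDiagram n m) =
      Nat.factorial (m * n) * superfac (m - 1) * superfac (n - 1) / superfac (m + n - 1) := by
  exact SYTaux.numSYT_rect_eq' n m hn hm
end

section
/- Let n ≥ 1 and let W and V be subsets of {1,…,n} with W ≼ V. Then the complements satisfy ({1,…,n} \ V) ≼ ({1,…,n} \ W). -/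
open Finset

lemma sorted_getD_le_iff' (t : ℕ) : ∀ (L : List ℕ), L.Pairwise (· ≤ ·) → ∀ i < L.length,
    (L.getD i 0 ≤ t ↔ i < L.countP (· ≤ t)) := by
  intro L
  induction L with
  | nil => intro _ i hi; simp at hi
  | cons a L ih =>
    intro hs i hi
    rw [List.pairwise_cons] at hs
    have hcnt : (a :: L).countP (· ≤ t) =
        (if a ≤ t then 1 else 0) + L.countP (· ≤ t) := by
      by_cases h : a ≤ t <;> simp [List.countP_cons, h, Nat.add_comm]
    cases i with
    | zero =>
      simp only [List.getD_cons_zero, hcnt]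
      constructor
      · intro h; simp [h]
      · intro h
        by_contra hat
        have hL0 : L.countP (· ≤ t) = 0 := by
          rw [List.countP_eq_zero]
          intro x hx
          have := hs.1 x hx
          simp only [decide_eq_true_eq]
          omega
        simp [hat, hL0] at h
    | succ i =>
      simp only [List.getD_cons_succ, hcnt]
      simp only [List.length_cons] at hi
      have hi' : i < L.length := by omega
      rw [ih hs.2 i hi']
      by_cases hat : a ≤ t
      · simp [hat]; omega
      · have hL0 : L.countP (· ≤ t) = 0 := by
          rw [List.countP_eq_zero]
          intro x hx
          have := hs.1 x hx
          simp only [decide_eq_true_eq]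
          omega
        simp [hat, hL0]

lemma countP_sort_eq' (S : Finset ℕ) (t : ℕ) :
    (S.sort (· ≤ ·)).countP (· ≤ t) = (S.filter (· ≤ t)).card :=
  calc (S.sort (· ≤ ·)).countP (· ≤ t)
      = Multiset.countP (· ≤ t) ↑(S.sort (· ≤ ·)) := (Multiset.coe_countP _ _).symm
    _ = Multiset.countP (· ≤ t) S.val := by rw [Finset.sort_eq]
    _ = (S.filter (· ≤ t)).card := by
        rw [Multiset.countP_eq_card_filter]; rfl

/-- getD of sorted Finset vs filter cardinality. -/
lemma getD_sort_le_iff (S : Finset ℕ) (t i : ℕ) (hi : i < S.card) :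
    (S.sort (· ≤ ·)).getD i 0 ≤ t ↔ i < (S.filter (· ≤ t)).card := by
  rw [← countP_sort_eq']
  exact sorted_getD_le_iff' t _ (S.pairwise_sort (· ≤ ·)) i (by rwa [Finset.length_sort])

lemma colLE_iff' (W V : Finset ℕ) (hc : V.card ≤ W.card) :
    colLE W V ↔ ∀ t, (V.filter (· ≤ t)).card ≤ (W.filter (· ≤ t)).card := by
  constructor
  · rintro ⟨-, h⟩ t
    set j := (V.filter (· ≤ t)).card with hj
    rcases Nat.eq_zero_or_pos j with h0 | h0
    · omega
    have hjV : j ≤ V.card := Finset.card_filter_le _ _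
    have h1 : (V.sort (· ≤ ·)).getD (j-1) 0 ≤ t := by
      rw [getD_sort_le_iff V t (j-1) (by omega)]; omega
    have h2 : (W.sort (· ≤ ·)).getD (j-1) 0 ≤ t :=
      le_trans (h (j-1) (by omega)) h1
    rw [getD_sort_le_iff W t (j-1) (by omega)] at h2
    omega
  · intro h
    refine ⟨hc, fun i hi => ?_⟩
    set t := (V.sort (· ≤ ·)).getD i 0 with ht
    have h1 : i < (V.filter (· ≤ t)).card := by
      rw [← getD_sort_le_iff V t i hi]
    have h2 : i < (W.filter (· ≤ t)).card := lt_of_lt_of_le h1 (h t)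
    rw [← getD_sort_le_iff W t i (by omega)] at h2
    exact h2

/-- Column complement reverses the `≼` order: if `W ≼ V` for `W, V ⊆ {1,…,n}`, then
`({1,…,n} \ V) ≼ ({1,…,n} \ W)`. -/
theorem colLE_compl (n : ℕ) (hn : 1 ≤ n) (W V : Finset ℕ)
    (hW : W ⊆ Finset.Icc 1 n) (hV : V ⊆ Finset.Icc 1 n) (h : colLE W V) :
    colLE (Finset.Icc 1 n \ V) (Finset.Icc 1 n \ W) := by
  have hcV : V.card ≤ n := by
    simpa using Finset.card_le_card hV
  have hcW : W.card ≤ n := by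
    simpa using Finset.card_le_card hW
  have hc : V.card ≤ W.card := h.1
  have hWV := (colLE_iff' W V hc).mp h
  have cardV : (Finset.Icc 1 n \ V).card = n - V.card := by
    rw [Finset.card_sdiff_of_subset hV]; simp
  have cardW : (Finset.Icc 1 n \ W).card = n - W.card := by
    rw [Finset.card_sdiff_of_subset hW]; simp
  have hc' : (Finset.Icc 1 n \ W).card ≤ (Finset.Icc 1 n \ V).card := by
    rw [cardV, cardW]; omega
  rw [colLE_iff' _ _ hc']
  intro t
  have key : ∀ (S : Finset ℕ), S ⊆ Finset.Icc 1 n →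
      ((Finset.Icc 1 n \ S).filter (· ≤ t)).card =
        ((Finset.Icc 1 n).filter (· ≤ t)).card - (S.filter (· ≤ t)).card := by
    intro S hS
    have hfs : (Finset.Icc 1 n \ S).filter (· ≤ t) =
        (Finset.Icc 1 n).filter (· ≤ t) \ S.filter (· ≤ t) := by
      ext x
      simp only [Finset.mem_filter, Finset.mem_sdiff]
      tauto
    rw [hfs, Finset.card_sdiff_of_subset (Finset.filter_subset_filter _ hS)]
  rw [key V hV, key W hW]
  exact Nat.sub_le_sub_left (hWV t) _
end
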